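/- Let p > 1 and suppose f, g ∈ L²(ℝ) satisfy ‖f‖₂ = ‖g‖₂ = 1 and that Δ_p(f) and Δ_p(g) are finite. For each real α with |α| < 1 define h_α = (f + αg)/‖f + αg‖₂. Then lim_{α→0} Δ_p(h_α) = Δ_p(f) and lim_{α→0} μ_p(h_α) = μ_p(f). -/

import Mathlib

/-!
For fixed `a`, `√(pVar p F a)` is the `L²` norm of `t ↦ |t - a| ^ (p / 2) • F t`, so the
triangle inequality gives `|√pVar(f + α g) a - √pVar f a| ≤ |α| √pVar g a`: the functionals
`a ↦ √pVar(f + α g) a` converge to `a ↦ √pVar f a` locally uniformly as `α → 0`.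
Since `p > 1`, `a ↦ pVar p F a` is strictly convex and coercive, so it has a unique minimizer,
which is `pMean p F`. The minimizers for `f + α g` stay in a fixed compact set, and every
cluster point of them minimizes the limit functional, hence equals `pMean p f`; evaluating the
converging functionals along converging points then gives the dispersions.
Normalizing `f + α g` does not move its `p`-mean and divides its `p`-dispersion by
`‖f + α g‖₂ → 1`.
-/
open MeasureTheory Filter

/-- `pVar p h a = ∫ |t - a|^p * |h t|^2 dt`. -/
noncomputable def pVar (p : ℝ) (h : ℝ → ℂ) (a : ℝ) : ℝ :=
  ∫ t : ℝ, |t - a| ^ p * ‖h t‖ ^ 2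

/-- The `p`-mean `μ_p(h)`: the (under the standing hypotheses unique) global minimizer
of `a ↦ pVar p h a`. -/
noncomputable def pMean (p : ℝ) (h : ℝ → ℂ) : ℝ :=
  sInf {a : ℝ | ∀ b : ℝ, pVar p h a ≤ pVar p h b}

/-- The `p`-dispersion `Δ_p(h) = (∫ |t - μ_p(h)|^p |h t|²)^{1/2}`. -/
noncomputable def pDisp (p : ℝ) (h : ℝ → ℂ) : ℝ :=
  Real.sqrt (pVar p h (pMean p h))

/-- The normalized perturbation `h_α = (f + α g) / ‖f + α g‖₂`. -/
noncomputable def normPert (f g : ℝ → ℂ) (α : ℝ) : ℝ → ℂ :=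
  fun t => (f t + (α : ℂ) * g t) /
    ((eLpNorm (fun s => f s + (α : ℂ) * g s) 2 volume).toReal : ℂ)

open Set Topology

theorem abs_add_rpow_le {p : ℝ} (hp : 1 ≤ p) (x y : ℝ) :
    |x + y| ^ p ≤ 2 ^ (p - 1) * (|x| ^ p + |y| ^ p) := by
  have h : ((‖x‖₊ + ‖y‖₊ : NNReal) : ℝ) ^ p ≤ 2 ^ (p - 1) * ((‖x‖₊ : ℝ) ^ p + (‖y‖₊ : ℝ) ^ p) := by
    exact_mod_cast NNReal.rpow_add_le_mul_rpow_add_rpow ‖x‖₊ ‖y‖₊ hp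
  simp only [NNReal.coe_add, coe_nnnorm, Real.norm_eq_abs] at h
  exact (Real.rpow_le_rpow (abs_nonneg _) (abs_add_le x y) (by linarith)).trans h

theorem strictConvexOn_abs_rpow {p : ℝ} (hp : 1 < p) :
    StrictConvexOn ℝ univ fun x : ℝ => |x| ^ p := by
  refine ⟨convex_univ, fun x _ y _ hxy a b ha hb hab => ?_⟩
  simp only [smul_eq_mul]
  rcases eq_or_ne |x| |y| with hxy' | hxy'
  · obtain rfl : x = -y := (abs_eq_abs.mp hxy').resolve_left hxy
    have hy : y ≠ 0 := by rintro rfl; simp at hxy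
    have hlt : |a * -y + b * y| < |y| := by
      rw [show a * -y + b * y = (b - a) * y by ring, abs_mul]
      exact mul_lt_of_lt_one_left (abs_pos.2 hy) (abs_sub_lt_iff.2 ⟨by linarith, by linarith⟩)
    calc |a * -y + b * y| ^ p < |y| ^ p := Real.rpow_lt_rpow (abs_nonneg _) hlt (by linarith)
      _ = a * |-y| ^ p + b * |y| ^ p := by rw [abs_neg, ← add_mul, hab, one_mul]
  · have htri : |a * x + b * y| ≤ a * |x| + b * |y| := by
      calc |a * x + b * y| ≤ |a * x| + |b * y| := abs_add_le _ _
        _ = a * |x| + b * |y| := by rw [abs_mul, abs_mul, abs_of_pos ha, abs_of_pos hb]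
    calc |a * x + b * y| ^ p ≤ (a * |x| + b * |y|) ^ p :=
          Real.rpow_le_rpow (abs_nonneg _) htri (by linarith)
      _ < a * |x| ^ p + b * |y| ^ p := by
          simpa using (strictConvexOn_rpow hp).2 (abs_nonneg x) (abs_nonneg y) hxy' ha hb hab

theorem strictConvexOn_abs_sub_rpow {p : ℝ} (hp : 1 < p) (t : ℝ) :
    StrictConvexOn ℝ univ fun a : ℝ => |t - a| ^ p := by
  refine ⟨convex_univ, fun a _ b _ hab θ η hθ hη hθη => ?_⟩
  have h := (strictConvexOn_abs_rpow hp).2 (mem_univ (t - a)) (mem_univ (t - b))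
    (fun h => hab (by linarith)) hθ hη hθη
  simp only [smul_eq_mul] at h ⊢
  rwa [show θ * (t - a) + η * (t - b) = t - (θ * a + η * b) by linear_combination t * hθη] at h

section LpNorm

variable {X E : Type*} {m : MeasurableSpace X} {μ : Measure X} [NormedAddCommGroup E]

theorem integral_norm_sq_eq_lpNorm_sq {F : X → E} (hF : AEStronglyMeasurable F μ) :
    ∫ x, ‖F x‖ ^ 2 ∂μ = lpNorm F 2 μ ^ 2 := by
  rw [lpNorm_eq_integral_norm_rpow_toReal two_ne_zero ENNReal.ofNat_ne_top hF,
    ← Real.rpow_natCast, ← Real.rpow_mul (integral_nonneg fun _ => by positivity)]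
  norm_num

theorem integral_mul_norm_sq_pos {w : X → ℝ} {F : X → E} (hw : ∀ x, 0 < w x)
    (hint : Integrable (fun x => w x * ‖F x‖ ^ 2) μ) (hF0 : ¬F =ᵐ[μ] 0) :
    0 < ∫ x, w x * ‖F x‖ ^ 2 ∂μ := by
  rw [integral_pos_iff_support_of_nonneg (fun x => by have := hw x; positivity) hint]
  have hsupp : Function.support (fun x => w x * ‖F x‖ ^ 2) = Function.support F := by
    ext x; simp [(hw x).ne']
  rw [hsupp, pos_iff_ne_zero]
  simpa [Filter.EventuallyEq, ae_iff, Function.support] using hF0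

theorem abs_lpNorm_add_sub_lpNorm_le {q : ENNReal} {u w : X → E} (hu : MemLp u q μ)
    (hw : MemLp w q μ) (hq : 1 ≤ q) :
    |lpNorm (u + w) q μ - lpNorm u q μ| ≤ lpNorm w q μ :=
  abs_sub_le_iff.2 ⟨by linarith [lpNorm_add_le hu (g := w) hq],
    by linarith [lpNorm_le_add_lpNorm_add hw (f := u) hq]⟩

theorem lpNorm_pos {q : ENNReal} {u : X → E} (hu : MemLp u q μ) (hq : q ≠ 0)
    (hu0 : ¬u =ᵐ[μ] 0) : 0 < lpNorm u q μ :=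
  lpNorm_nonneg.lt_of_ne' ((lpNorm_eq_zero hu hq).not.2 hu0)

theorem tendsto_lpNorm_add_smul {𝕜 : Type*} [NormedField 𝕜] [Module 𝕜 E] [NormSMulClass 𝕜 E]
    {q : ENNReal} {u v : X → E} (hu : MemLp u q μ) (hv : MemLp v q μ) (hq : 1 ≤ q) :
    Tendsto (fun c : 𝕜 => lpNorm (u + c • v) q μ) (𝓝 0) (𝓝 (lpNorm u q μ)) := by
  have hlim : Tendsto (fun c : 𝕜 => ‖c‖ * lpNorm v q μ) (𝓝 0) (𝓝 0) := by
    simpa using (continuous_norm.tendsto (0 : 𝕜)).mul_const (lpNorm v q μ)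
  refine tendsto_iff_dist_tendsto_zero.2 (squeeze_zero (fun _ => dist_nonneg) (fun c => ?_) hlim)
  rw [Real.dist_eq, ← coe_nnnorm, ← lpNorm_const_smul]
  exact abs_lpNorm_add_sub_lpNorm_le hu (hv.const_smul c) hq

end LpNorm

theorem tendsto_of_tendstoLocallyUniformly_of_isMin {ι X : Type*} [TopologicalSpace X]
    {l : Filter ι} {F : ι → X → ℝ} {f : X → ℝ} (hF : TendstoLocallyUniformly F f l)
    (hf : Continuous f) {K : Set X} (hK : IsCompact K) {x : ι → X} (hxK : ∀ᶠ i in l, x i ∈ K)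
    {x₀ : X} (hmin : ∀ᶠ i in l, F i (x i) ≤ F i x₀) (huniq : ∀ y, f y ≤ f x₀ → y = x₀) :
    Tendsto x l (𝓝 x₀) := by
  refine hK.tendsto_nhds_of_unique_mapClusterPt hxK fun y _ hy => huniq y ?_
  obtain ⟨U, hUl, hxU⟩ := mapClusterPt_iff_ultrafilter.1 hy
  have hFU : TendstoLocallyUniformly F f U := fun u hu z =>
    (hF u hu z).imp fun _ ⟨ht, hev⟩ => ⟨ht, hev.filter_mono hUl⟩
  exact le_of_tendsto_of_tendsto (hFU.tendsto_comp hf.continuousAt hxU)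
    (hFU.tendsto_comp hf.continuousAt tendsto_const_nhds) (hmin.filter_mono hUl)

section pVar

variable {p : ℝ} {F : ℝ → ℂ}

theorem pVar_nonneg (p : ℝ) (F : ℝ → ℂ) (a : ℝ) : 0 ≤ pVar p F a :=
  integral_nonneg fun _ => by positivity

theorem pVar_div_const (p : ℝ) (F : ℝ → ℂ) (c : ℂ) (b : ℝ) :
    pVar p (fun t => F t / c) b = pVar p F b / ‖c‖ ^ 2 := by
  simp only [pVar, norm_div, div_pow, ← integral_div, mul_div_assoc]

theorem pMean_div_const (p : ℝ) (F : ℝ → ℂ) {c : ℂ} (hc : c ≠ 0) :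
    pMean p (fun t => F t / c) = pMean p F := by
  simp only [pMean, pVar_div_const,
    div_le_div_iff_of_pos_right (by positivity : (0 : ℝ) < ‖c‖ ^ 2)]

theorem pDisp_div_const (p : ℝ) (F : ℝ → ℂ) {c : ℂ} (hc : c ≠ 0) :
    pDisp p (fun t => F t / c) = pDisp p F / ‖c‖ := by
  rw [pDisp, pDisp, pMean_div_const p F hc, pVar_div_const, Real.sqrt_div' _ (by positivity),
    Real.sqrt_sq (norm_nonneg c)]

theorem integrable_abs_sub_rpow_mul_norm_sq (hp : 1 ≤ p) (hF : MemLp F 2 volume)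
    (hFp : Integrable (fun t : ℝ => |t| ^ p * ‖F t‖ ^ 2) volume) (a : ℝ) :
    Integrable (fun t : ℝ => |t - a| ^ p * ‖F t‖ ^ 2) volume := by
  have hF2 := (memLp_two_iff_integrable_sq_norm hF.1).1 hF
  refine ((hFp.add (hF2.const_mul (|a| ^ p))).const_mul (2 ^ (p - 1))).mono'
    (((measurable_id.sub_const a).abs.pow_const p).aestronglyMeasurable.mul
      hF2.aestronglyMeasurable) (Eventually.of_forall fun t => ?_)
  rw [Real.norm_of_nonneg (by positivity), Pi.add_apply]
  calc |t - a| ^ p * ‖F t‖ ^ 2 ≤ 2 ^ (p - 1) * (|t| ^ p + |-a| ^ p) * ‖F t‖ ^ 2 := by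
        gcongr; exact abs_add_rpow_le hp t (-a)
    _ = _ := by rw [abs_neg]; ring

theorem aestronglyMeasurable_abs_sub_rpow_smul (hF : AEStronglyMeasurable F volume) (b q : ℝ) :
    AEStronglyMeasurable (fun t : ℝ => |t - b| ^ q • F t) volume :=
  ((measurable_id.sub_const b).abs.pow_const q).aestronglyMeasurable.smul hF

theorem norm_abs_sub_rpow_half_smul_sq (z : ℂ) (t b : ℝ) :
    ‖|t - b| ^ (p / 2) • z‖ ^ 2 = |t - b| ^ p * ‖z‖ ^ 2 := by
  rw [norm_smul, mul_pow, Real.norm_of_nonneg (by positivity), ← Real.rpow_natCast,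
    ← Real.rpow_mul (abs_nonneg _)]
  norm_num

theorem integrable_iff_memLp_abs_sub_rpow_smul (hF : AEStronglyMeasurable F volume) (b : ℝ) :
    Integrable (fun t : ℝ => |t - b| ^ p * ‖F t‖ ^ 2) volume ↔
      MemLp (fun t : ℝ => |t - b| ^ (p / 2) • F t) 2 volume := by
  simp only [memLp_two_iff_integrable_sq_norm (aestronglyMeasurable_abs_sub_rpow_smul hF b _),
    norm_abs_sub_rpow_half_smul_sq]

theorem memLp_abs_sub_rpow_smul (hp : 1 ≤ p) (hF : MemLp F 2 volume)
    (hFp : Integrable (fun t : ℝ => |t| ^ p * ‖F t‖ ^ 2) volume) (b : ℝ) :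
    MemLp (fun t : ℝ => |t - b| ^ (p / 2) • F t) 2 volume :=
  (integrable_iff_memLp_abs_sub_rpow_smul hF.1 b).1
    (integrable_abs_sub_rpow_mul_norm_sq hp hF hFp b)

theorem sqrt_pVar_eq_lpNorm (hF : AEStronglyMeasurable F volume) (b : ℝ) :
    √(pVar p F b) = lpNorm (fun t : ℝ => |t - b| ^ (p / 2) • F t) 2 volume := by
  rw [← Real.sqrt_sq lpNorm_nonneg,
    ← integral_norm_sq_eq_lpNorm_sq (aestronglyMeasurable_abs_sub_rpow_smul hF b _)]
  simp only [norm_abs_sub_rpow_half_smul_sq, pVar]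

theorem mul_pVar_add_mul_pVar (hp : 1 ≤ p) (hF : MemLp F 2 volume)
    (hFp : Integrable (fun t : ℝ => |t| ^ p * ‖F t‖ ^ 2) volume) (θ η a b : ℝ) :
    θ * pVar p F a + η * pVar p F b =
      ∫ t, (θ * |t - a| ^ p + η * |t - b| ^ p) * ‖F t‖ ^ 2 := by
  simp only [pVar, add_mul, mul_assoc]
  rw [integral_add ((integrable_abs_sub_rpow_mul_norm_sq hp hF hFp a).const_mul θ)
    ((integrable_abs_sub_rpow_mul_norm_sq hp hF hFp b).const_mul η), integral_const_mul,
    integral_const_mul]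

theorem integrable_mul_abs_sub_rpow_add_mul (hp : 1 ≤ p) (hF : MemLp F 2 volume)
    (hFp : Integrable (fun t : ℝ => |t| ^ p * ‖F t‖ ^ 2) volume) (θ η a b : ℝ) :
    Integrable (fun t => (θ * |t - a| ^ p + η * |t - b| ^ p) * ‖F t‖ ^ 2) volume := by
  simpa only [add_mul, mul_assoc] using
    ((integrable_abs_sub_rpow_mul_norm_sq hp hF hFp a).const_mul θ).fun_add
      ((integrable_abs_sub_rpow_mul_norm_sq hp hF hFp b).const_mul η)

theorem convexOn_pVar (hp : 1 < p) (hF : MemLp F 2 volume)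
    (hFp : Integrable (fun t : ℝ => |t| ^ p * ‖F t‖ ^ 2) volume) :
    ConvexOn ℝ univ (pVar p F) := by
  refine ⟨convex_univ, fun a _ b _ θ η hθ hη hθη => ?_⟩
  simp only [smul_eq_mul]
  rw [mul_pVar_add_mul_pVar hp.le hF hFp]
  refine integral_mono (integrable_abs_sub_rpow_mul_norm_sq hp.le hF hFp _)
    (integrable_mul_abs_sub_rpow_add_mul hp.le hF hFp θ η a b) fun t => ?_
  have h := (strictConvexOn_abs_sub_rpow hp t).convexOn.2 (mem_univ a) (mem_univ b) hθ hη hθη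
  simp only [smul_eq_mul] at h
  exact mul_le_mul_of_nonneg_right h (by positivity)

theorem strictConvexOn_pVar (hp : 1 < p) (hF : MemLp F 2 volume)
    (hFp : Integrable (fun t : ℝ => |t| ^ p * ‖F t‖ ^ 2) volume) (hF0 : ¬F =ᵐ[volume] 0) :
    StrictConvexOn ℝ univ (pVar p F) := by
  refine ⟨convex_univ, fun a _ b _ hab θ η hθ hη hθη => ?_⟩
  simp only [smul_eq_mul]
  have hw : ∀ t : ℝ, 0 < θ * |t - a| ^ p + η * |t - b| ^ p - |t - (θ * a + η * b)| ^ p := by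
    intro t
    have h := (strictConvexOn_abs_sub_rpow hp t).2 (mem_univ a) (mem_univ b) hab hθ hη hθη
    simp only [smul_eq_mul] at h
    linarith
  have hcomb := integrable_mul_abs_sub_rpow_add_mul hp.le hF hFp θ η a b
  have hmid := integrable_abs_sub_rpow_mul_norm_sq hp.le hF hFp (θ * a + η * b)
  have hpos := integral_mul_norm_sq_pos hw (by simpa only [sub_mul] using hcomb.sub' hmid) hF0
  simp only [sub_mul] at hpos
  rw [integral_sub hcomb hmid, ← mul_pVar_add_mul_pVar hp.le hF hFp] at hpos
  exact sub_pos.1 hpos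

theorem continuous_pVar (hp : 1 < p) (hF : MemLp F 2 volume)
    (hFp : Integrable (fun t : ℝ => |t| ^ p * ‖F t‖ ^ 2) volume) : Continuous (pVar p F) :=
  continuousOn_univ.1 ((convexOn_pVar hp hF hFp).continuousOn isOpen_univ)

theorem abs_rpow_mul_integral_norm_sq_le (hp : 1 ≤ p) (hF : MemLp F 2 volume)
    (hFp : Integrable (fun t : ℝ => |t| ^ p * ‖F t‖ ^ 2) volume) (a : ℝ) :
    |a| ^ p * ∫ t, ‖F t‖ ^ 2 ≤ 2 ^ (p - 1) * (pVar p F a + pVar p F 0) := by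
  have hsum := mul_pVar_add_mul_pVar hp hF hFp 1 1 a 0
  rw [one_mul, one_mul] at hsum
  rw [hsum, ← integral_const_mul, ← integral_const_mul]
  refine integral_mono (((memLp_two_iff_integrable_sq_norm hF.1).1 hF).const_mul _)
    ((integrable_mul_abs_sub_rpow_add_mul hp hF hFp 1 1 a 0).const_mul _) fun t => ?_
  have h := abs_add_rpow_le hp (-(t - a)) (t - 0)
  rw [show -(t - a) + (t - 0) = a by ring, abs_neg] at h
  simp only [one_mul, ← mul_assoc]
  exact mul_le_mul_of_nonneg_right h (by positivity)

theorem tendsto_pVar_cocompact (hp : 1 ≤ p) (hF : MemLp F 2 volume)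
    (hFp : Integrable (fun t : ℝ => |t| ^ p * ‖F t‖ ^ 2) volume) (hF0 : ¬F =ᵐ[volume] 0) :
    Tendsto (pVar p F) (cocompact ℝ) atTop := by
  have hI : 0 < ∫ t, ‖F t‖ ^ 2 := by
    simpa using integral_mul_norm_sq_pos (fun _ => one_pos)
      (by simpa using (memLp_two_iff_integrable_sq_norm hF.1).1 hF) hF0
  have hC : 0 < (∫ t, ‖F t‖ ^ 2) / 2 ^ (p - 1) := by positivity
  have hlim : Tendsto (fun a : ℝ => |a| ^ p * ((∫ t, ‖F t‖ ^ 2) / 2 ^ (p - 1)) - pVar p F 0)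
      (cocompact ℝ) atTop :=
    tendsto_atTop_add_const_right _ _ (((tendsto_rpow_atTop (by linarith)).comp
      tendsto_norm_cocompact_atTop).atTop_mul_const hC)
  refine tendsto_atTop_mono (fun a => ?_) hlim
  have h := abs_rpow_mul_integral_norm_sq_le hp hF hFp a
  rw [mul_div_assoc', sub_le_iff_le_add, div_le_iff₀ (by positivity)]
  linarith

theorem exists_forall_pVar_le (hp : 1 < p) (hF : MemLp F 2 volume)
    (hFp : Integrable (fun t : ℝ => |t| ^ p * ‖F t‖ ^ 2) volume) (hF0 : ¬F =ᵐ[volume] 0) :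
    ∃ m, ∀ b, pVar p F m ≤ pVar p F b :=
  (continuous_pVar hp hF hFp).exists_forall_le (tendsto_pVar_cocompact hp.le hF hFp hF0)

theorem pMean_eq_of_forall_le (hp : 1 < p) (hF : MemLp F 2 volume)
    (hFp : Integrable (fun t : ℝ => |t| ^ p * ‖F t‖ ^ 2) volume) (hF0 : ¬F =ᵐ[volume] 0)
    {m : ℝ} (hm : ∀ b, pVar p F m ≤ pVar p F b) : pMean p F = m := by
  have hmin : {a | ∀ b, pVar p F a ≤ pVar p F b} = {m} :=
    eq_singleton_iff_unique_mem.2 ⟨hm, fun a ha => (strictConvexOn_pVar hp hF hFp hF0).eq_of_isMinOn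
      (isMinOn_univ_iff.2 ha) (isMinOn_univ_iff.2 hm) (mem_univ a) (mem_univ m)⟩
  rw [pMean, hmin, csInf_singleton]

theorem pVar_pMean_le (hp : 1 < p) (hF : MemLp F 2 volume)
    (hFp : Integrable (fun t : ℝ => |t| ^ p * ‖F t‖ ^ 2) volume) (hF0 : ¬F =ᵐ[volume] 0)
    (b : ℝ) : pVar p F (pMean p F) ≤ pVar p F b := by
  obtain ⟨m, hm⟩ := exists_forall_pVar_le hp hF hFp hF0
  rw [pMean_eq_of_forall_le hp hF hFp hF0 hm]
  exact hm b

theorem abs_pMean_rpow_mul_integral_norm_sq_le (hp : 1 < p) (hF : MemLp F 2 volume)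
    (hFp : Integrable (fun t : ℝ => |t| ^ p * ‖F t‖ ^ 2) volume) (hF0 : ¬F =ᵐ[volume] 0) :
    |pMean p F| ^ p * ∫ t, ‖F t‖ ^ 2 ≤ 2 ^ p * pVar p F 0 := by
  calc |pMean p F| ^ p * ∫ t, ‖F t‖ ^ 2
      ≤ 2 ^ (p - 1) * (pVar p F (pMean p F) + pVar p F 0) :=
        abs_rpow_mul_integral_norm_sq_le hp.le hF hFp _
    _ ≤ 2 ^ (p - 1) * (2 * pVar p F 0) := by
        gcongr; linarith [pVar_pMean_le hp hF hFp hF0 0]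
    _ = 2 ^ p * pVar p F 0 := by
        rw [Real.rpow_sub_one two_ne_zero]; ring

end pVar

section Perturbation

variable {p : ℝ} {f g : ℝ → ℂ}

theorem abs_sub_rpow_smul_add_mul (f g : ℝ → ℂ) (p α b : ℝ) :
    (fun t : ℝ => |t - b| ^ (p / 2) • (f t + (α : ℂ) * g t)) =
      (fun t : ℝ => |t - b| ^ (p / 2) • f t) + α • fun t : ℝ => |t - b| ^ (p / 2) • g t := by
  funext t
  simp only [Pi.add_apply, Pi.smul_apply, smul_add, Complex.real_smul]
  ring

theorem memLp_add_mul (hf : MemLp f 2 volume) (hg : MemLp g 2 volume) (α : ℝ) :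
    MemLp (fun t => f t + (α : ℂ) * g t) 2 volume :=
  hf.add (hg.const_mul (α : ℂ))

theorem integrable_abs_rpow_mul_norm_add_mul_sq (hp : 1 ≤ p) (hf : MemLp f 2 volume)
    (hfp : Integrable (fun t : ℝ => |t| ^ p * ‖f t‖ ^ 2) volume) (hg : MemLp g 2 volume)
    (hgp : Integrable (fun t : ℝ => |t| ^ p * ‖g t‖ ^ 2) volume) (α : ℝ) :
    Integrable (fun t : ℝ => |t| ^ p * ‖f t + (α : ℂ) * g t‖ ^ 2) volume := by
  have h := (integrable_iff_memLp_abs_sub_rpow_smul (memLp_add_mul hf hg α).1 0).2 (by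
    rw [abs_sub_rpow_smul_add_mul]
    exact (memLp_abs_sub_rpow_smul hp hf hfp 0).add
      ((memLp_abs_sub_rpow_smul hp hg hgp 0).const_smul α))
  simpa only [sub_zero] using h

theorem abs_sqrt_pVar_add_mul_sub_le (hp : 1 ≤ p) (hf : MemLp f 2 volume)
    (hfp : Integrable (fun t : ℝ => |t| ^ p * ‖f t‖ ^ 2) volume) (hg : MemLp g 2 volume)
    (hgp : Integrable (fun t : ℝ => |t| ^ p * ‖g t‖ ^ 2) volume) (α b : ℝ) :
    |√(pVar p (fun t => f t + (α : ℂ) * g t) b) - √(pVar p f b)| ≤ |α| * √(pVar p g b) := by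
  rw [sqrt_pVar_eq_lpNorm (memLp_add_mul hf hg α).1, sqrt_pVar_eq_lpNorm hf.1,
    sqrt_pVar_eq_lpNorm hg.1, abs_sub_rpow_smul_add_mul]
  calc _ ≤ lpNorm (α • fun t : ℝ => |t - b| ^ (p / 2) • g t) 2 volume :=
        abs_lpNorm_add_sub_lpNorm_le (memLp_abs_sub_rpow_smul hp hf hfp b)
          ((memLp_abs_sub_rpow_smul hp hg hgp b).const_smul α) one_le_two
    _ = |α| * lpNorm (fun t : ℝ => |t - b| ^ (p / 2) • g t) 2 volume := by
        rw [lpNorm_const_smul, coe_nnnorm, Real.norm_eq_abs]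

theorem tendstoLocallyUniformly_sqrt_pVar_add_mul (hp : 1 < p) (hf : MemLp f 2 volume)
    (hfp : Integrable (fun t : ℝ => |t| ^ p * ‖f t‖ ^ 2) volume) (hg : MemLp g 2 volume)
    (hgp : Integrable (fun t : ℝ => |t| ^ p * ‖g t‖ ^ 2) volume) :
    TendstoLocallyUniformly (fun (α : ℝ) b => √(pVar p (fun t => f t + (α : ℂ) * g t) b))
      (fun b => √(pVar p f b)) (𝓝 0) := by
  rw [tendstoLocallyUniformly_iff_forall_isCompact]
  intro K hK
  obtain ⟨C, hC⟩ := hK.exists_bound_of_continuousOn (continuous_pVar hp hg hgp).sqrt.continuousOn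
  rw [Metric.tendstoUniformlyOn_iff]
  intro ε hε
  have hsmall : ∀ᶠ α : ℝ in 𝓝 0, |α| * C < ε :=
    (continuous_abs.mul continuous_const).tendsto' (0 : ℝ) 0 (by simp) |>.eventually
      (gt_mem_nhds hε)
  filter_upwards [hsmall] with α hα b hb
  rw [dist_comm, Real.dist_eq]
  calc _ ≤ |α| * √(pVar p g b) := abs_sqrt_pVar_add_mul_sub_le hp.le hf hfp hg hgp α b
    _ ≤ |α| * C := by
        gcongr
        simpa only [Real.norm_of_nonneg (Real.sqrt_nonneg _)] using hC b hb
    _ < ε := hα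

theorem tendsto_lpNorm_add_mul (hf : MemLp f 2 volume) (hg : MemLp g 2 volume) :
    Tendsto (fun α : ℝ => lpNorm (fun t => f t + (α : ℂ) * g t) 2 volume) (𝓝 0)
      (𝓝 (lpNorm f 2 volume)) := by
  convert tendsto_lpNorm_add_smul (𝕜 := ℝ) hf hg one_le_two using 3 with α
  funext t
  simp [Complex.real_smul]

theorem eventually_not_add_mul_ae_eq_zero (hf : MemLp f 2 volume) (hg : MemLp g 2 volume)
    (hf0 : ¬f =ᵐ[volume] 0) :
    ∀ᶠ α : ℝ in 𝓝 0, ¬(fun t => f t + (α : ℂ) * g t) =ᵐ[volume] 0 := by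
  filter_upwards [(tendsto_lpNorm_add_mul hf hg).eventually_ne
    (lpNorm_pos hf two_ne_zero hf0).ne'] with α hα
  exact (lpNorm_eq_zero (memLp_add_mul hf hg α) two_ne_zero).not.1 hα

theorem exists_eventually_abs_pMean_add_mul_le (hp : 1 < p) (hf : MemLp f 2 volume)
    (hfp : Integrable (fun t : ℝ => |t| ^ p * ‖f t‖ ^ 2) volume) (hg : MemLp g 2 volume)
    (hgp : Integrable (fun t : ℝ => |t| ^ p * ‖g t‖ ^ 2) volume) (hf0 : ¬f =ᵐ[volume] 0) :
    ∃ R, ∀ᶠ α : ℝ in 𝓝 0, |pMean p (fun t => f t + (α : ℂ) * g t)| ≤ R := by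
  set L := lpNorm f 2 volume
  have hL : 0 < L := lpNorm_pos hf two_ne_zero hf0
  set S := √(pVar p f 0) + 1
  refine ⟨max 1 (2 ^ p * S ^ 2 / (L / 2) ^ 2), ?_⟩
  have hnorm := (tendsto_lpNorm_add_mul hf hg).eventually (lt_mem_nhds (half_lt_self hL))
  have hvar := ((tendstoLocallyUniformly_sqrt_pVar_add_mul hp hf hfp hg hgp).tendsto_comp
    (continuous_pVar hp hf hfp).sqrt.continuousAt (tendsto_const_nhds (x := (0 : ℝ)))).eventually
    (gt_mem_nhds (lt_add_one _))
  filter_upwards [hnorm, hvar, eventually_not_add_mul_ae_eq_zero hf hg hf0]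
    with α hnα hvα hφ0
  have hφ := memLp_add_mul hf hg α
  have hbound := abs_pMean_rpow_mul_integral_norm_sq_le hp hφ
    (integrable_abs_rpow_mul_norm_add_mul_sq hp.le hf hfp hg hgp α) hφ0
  rw [integral_norm_sq_eq_lpNorm_sq hφ.1] at hbound
  have hv : pVar p (fun t => f t + (α : ℂ) * g t) 0 ≤ S ^ 2 := by
    rw [← Real.sq_sqrt (pVar_nonneg p _ 0)]
    exact pow_le_pow_left₀ (Real.sqrt_nonneg _) hvα.le 2
  have hpow : |pMean p (fun t => f t + (α : ℂ) * g t)| ^ p ≤ 2 ^ p * S ^ 2 / (L / 2) ^ 2 := by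
    rw [le_div_iff₀ (by positivity)]
    calc _ ≤ |pMean p (fun t => f t + (α : ℂ) * g t)| ^ p *
          lpNorm (fun t => f t + (α : ℂ) * g t) 2 volume ^ 2 := by gcongr
      _ ≤ 2 ^ p * pVar p (fun t => f t + (α : ℂ) * g t) 0 := hbound
      _ ≤ 2 ^ p * S ^ 2 := by gcongr
  rcases le_total |pMean p (fun t => f t + (α : ℂ) * g t)| 1 with h1 | h1
  · exact h1.trans (le_max_left _ _)
  · exact (Real.self_le_rpow_of_one_le h1 hp.le).trans (hpow.trans (le_max_right _ _))

theorem tendsto_pMean_add_mul (hp : 1 < p) (hf : MemLp f 2 volume)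
    (hfp : Integrable (fun t : ℝ => |t| ^ p * ‖f t‖ ^ 2) volume) (hg : MemLp g 2 volume)
    (hgp : Integrable (fun t : ℝ => |t| ^ p * ‖g t‖ ^ 2) volume) (hf0 : ¬f =ᵐ[volume] 0) :
    Tendsto (fun α : ℝ => pMean p (fun t => f t + (α : ℂ) * g t)) (𝓝 0) (𝓝 (pMean p f)) := by
  obtain ⟨R, hR⟩ := exists_eventually_abs_pMean_add_mul_le hp hf hfp hg hgp hf0
  refine tendsto_of_tendstoLocallyUniformly_of_isMin
    (tendstoLocallyUniformly_sqrt_pVar_add_mul hp hf hfp hg hgp)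
    (continuous_pVar hp hf hfp).sqrt (isCompact_Icc (a := -R) (b := R))
    (hR.mono fun α h => abs_le.1 h) ?_ fun y hy => ?_
  · filter_upwards [eventually_not_add_mul_ae_eq_zero hf hg hf0] with α hα
    exact Real.sqrt_le_sqrt (pVar_pMean_le hp (memLp_add_mul hf hg α)
      (integrable_abs_rpow_mul_norm_add_mul_sq hp.le hf hfp hg hgp α) hα _)
  · rw [Real.sqrt_le_sqrt_iff (pVar_nonneg p f _)] at hy
    exact (pMean_eq_of_forall_le hp hf hfp hf0
      fun b => hy.trans (pVar_pMean_le hp hf hfp hf0 b)).symm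

theorem tendsto_pDisp_add_mul (hp : 1 < p) (hf : MemLp f 2 volume)
    (hfp : Integrable (fun t : ℝ => |t| ^ p * ‖f t‖ ^ 2) volume) (hg : MemLp g 2 volume)
    (hgp : Integrable (fun t : ℝ => |t| ^ p * ‖g t‖ ^ 2) volume) (hf0 : ¬f =ᵐ[volume] 0) :
    Tendsto (fun α : ℝ => pDisp p (fun t => f t + (α : ℂ) * g t)) (𝓝 0) (𝓝 (pDisp p f)) :=
  (tendstoLocallyUniformly_sqrt_pVar_add_mul hp hf hfp hg hgp).tendsto_comp
    (continuous_pVar hp hf hfp).sqrt.continuousAt (tendsto_pMean_add_mul hp hf hfp hg hgp hf0)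

end Perturbation

theorem statement3_general (p : ℝ) (hp : 1 < p) (f g : ℝ → ℂ)
    (hfL2 : MemLp f 2 (volume : Measure ℝ)) (hgL2 : MemLp g 2 (volume : Measure ℝ))
    (hfnorm : eLpNorm f 2 volume = 1)
    (hffin : Integrable (fun t : ℝ => |t| ^ p * ‖f t‖ ^ 2) volume)
    (hgfin : Integrable (fun t : ℝ => |t| ^ p * ‖g t‖ ^ 2) volume) :
    Tendsto (fun α : ℝ => pDisp p (normPert f g α)) (nhds 0) (nhds (pDisp p f)) ∧
    Tendsto (fun α : ℝ => pMean p (normPert f g α)) (nhds 0) (nhds (pMean p f)) := by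
  have hf0 : ¬f =ᵐ[volume] 0 := fun h => by simp [eLpNorm_congr_ae h] at hfnorm
  have hnorm : Tendsto (fun α : ℝ => (eLpNorm (fun s => f s + (α : ℂ) * g s) 2 volume).toReal)
      (𝓝 0) (𝓝 1) := by
    simp only [toReal_eLpNorm (memLp_add_mul hfL2 hgL2 _).1]
    simpa [← toReal_eLpNorm hfL2.1, hfnorm] using tendsto_lpNorm_add_mul hfL2 hgL2
  have hnorm0 : ∀ᶠ α : ℝ in 𝓝 0,
      ((eLpNorm (fun s => f s + (α : ℂ) * g s) 2 volume).toReal : ℂ) ≠ 0 :=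
    (hnorm.eventually_ne one_ne_zero).mono fun _ h => Complex.ofReal_ne_zero.2 h
  constructor
  · have h := (tendsto_pDisp_add_mul hp hfL2 hffin hgL2 hgfin hf0).div hnorm.abs (by norm_num)
    rw [abs_one, div_one] at h
    refine h.congr' (hnorm0.mono fun α hα => ?_)
    simp only [Pi.div_apply]
    rw [← Real.norm_eq_abs, ← Complex.norm_real]
    exact (pDisp_div_const p _ hα).symm
  · exact (tendsto_pMean_add_mul hp hfL2 hffin hgL2 hgfin hf0).congr'
      (hnorm0.mono fun α hα => (pMean_div_const p _ hα).symm)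

/-- Let `p > 1` and `f, g ∈ L²(ℝ)` with `‖f‖₂ = ‖g‖₂ = 1` and
`Δ_p(f), Δ_p(g) < ∞`.  For `|α| < 1` set `h_α = (f + αg)/‖f + αg‖₂`.  Then
`Δ_p(h_α) → Δ_p(f)` and `μ_p(h_α) → μ_p(f)` as `α → 0`. -/
theorem statement3 (p : ℝ) (hp : 1 < p) (f g : ℝ → ℂ)
    (hfL2 : MemLp f 2 (volume : Measure ℝ)) (hgL2 : MemLp g 2 (volume : Measure ℝ))
    (hfnorm : eLpNorm f 2 volume = 1) (hgnorm : eLpNorm g 2 volume = 1)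
    (hffin : Integrable (fun t : ℝ => |t| ^ p * ‖f t‖ ^ 2) volume)
    (hgfin : Integrable (fun t : ℝ => |t| ^ p * ‖g t‖ ^ 2) volume) :
    Tendsto (fun α : ℝ => pDisp p (normPert f g α)) (nhds 0) (nhds (pDisp p f)) ∧
    Tendsto (fun α : ℝ => pMean p (normPert f g α)) (nhds 0) (nhds (pMean p f)) :=
  statement3_general p hp f g hfL2 hgL2 hfnorm hffin hgfin
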